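/- Let R be a standard graded quotient of k[x₁,…,x_n] and f ∈ R_d homogeneous of degree d. Then the Hilbert series satisfies (R/(f))(u) ≥ [(1 − u^d) R(u)]_+ coefficientwise, where [Σ aᵢ uⁱ]_+ keeps aᵢ if all aⱼ > 0 for j ≤ i and is 0 otherwise. -/

import Mathlib

/-! For homogeneous `I`, the degree-`t` part of an element of `I + (F)` is an element of `I` plus
`F` times a form of degree `t - d`. Hence the kernel of `R_t → (R/(f))_t` lies in `f · R_{t-d}`
(and vanishes for `t < d`), which gives `dim (R/(f))_t ≥ dim R_t - dim R_{t-d}`; the truncation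
`[·]_+` never exceeds `max (·) 0`. -/

open MvPolynomial

/-- The graded Hilbert function of `k[x₁,…,x_n]/I` in the standard grading. -/
noncomputable def hilb1 (k : Type*) [Field k] (n : ℕ)
    (I : Ideal (MvPolynomial (Fin n) k)) (t : ℕ) : ℕ :=
  Module.finrank k
    ((homogeneousSubmodule (Fin n) k t).map (Ideal.Quotient.mkₐ k I).toLinearMap)

open scoped Classical in
/-- The univariate truncation `[·]_+`. -/
noncomputable def trunc1 (A : ℕ → ℤ) : ℕ → ℤ :=
  fun t => if ∀ s ≤ t, 0 < A s then A t else 0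

/-- Multiplication of a power series (given by its coefficients) by `(1 - u^d)`. -/
noncomputable def mulOneSub1 (d : ℕ) (A : ℕ → ℤ) : ℕ → ℤ :=
  fun t => A t - (if d ≤ t then A (t - d) else 0)

theorem MvPolynomial.homogeneousComponent_mul_of_isHomogeneous {σ R : Type*} [CommSemiring R]
    {d : ℕ} {F : MvPolynomial σ R} (hF : F.IsHomogeneous d) (t : ℕ) (g : MvPolynomial σ R) :
    homogeneousComponent t (F * g) =
      if d ≤ t then F * homogeneousComponent (t - d) g else 0 := by
  induction g using MvPolynomial.induction_on' with
  | monomial m c =>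
    have hFm := hF.mul (isHomogeneous_monomial c (n := m.degree) rfl)
    rw [homogeneousComponent_of_mem hFm, homogeneousComponent_of_mem
      (isHomogeneous_monomial c (n := m.degree) rfl)]
    split_ifs <;> first | rfl | (exfalso; omega) | simp
  | add p q hp hq => split_ifs at hp hq ⊢ <;> simp [mul_add, hp, hq]

instance MvPolynomial.finite_homogeneousSubmodule {σ R : Type*} [CommSemiring R] [Finite σ]
    (n : ℕ) : Module.Finite R (homogeneousSubmodule σ R n) :=
  Module.Finite.iff_fg.2 (homogeneousSubmodule_fg σ R n)

attribute [local instance] MvPolynomial.gradedAlgebra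

theorem MvPolynomial.exists_sub_homogeneousComponent_mul_mem {σ R : Type*} [CommRing R]
    {I : Ideal (MvPolynomial σ R)} (hI : I.IsHomogeneous (homogeneousSubmodule σ R))
    {F v : MvPolynomial σ R} {t : ℕ} (hv : v.IsHomogeneous t) (h : v ∈ I ⊔ Ideal.span {F}) :
    ∃ a, v - homogeneousComponent t (F * a) ∈ I := by
  obtain ⟨i, hi, _, hj, rfl⟩ := Submodule.mem_sup.1 h
  obtain ⟨a, rfl⟩ := Ideal.mem_span_singleton'.1 hj
  refine ⟨a, ?_⟩
  rw [← homogeneousComponent_eq_self hv, map_add, mul_comm, add_sub_cancel_right]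
  exact homogeneousComponent_mem_of_mem hI hi t

theorem Submodule.finrank_map_add_finrank_inf_ker {K V V₂ : Type*} [DivisionRing K]
    [AddCommGroup V] [Module K V] [AddCommGroup V₂] [Module K V₂] (f : V →ₗ[K] V₂)
    (W : Submodule K V) [FiniteDimensional K W] :
    Module.finrank K (W.map f) + Module.finrank K ↥(W ⊓ LinearMap.ker f) = Module.finrank K W := by
  rw [← (f.comp W.subtype).finrank_range_add_finrank_ker, LinearMap.range_comp,
    Submodule.range_subtype, LinearMap.ker_comp, ← Submodule.map_comap_subtype,
    Submodule.finrank_map_subtype_eq]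

theorem trunc1_le_max (A : ℕ → ℤ) (t : ℕ) : trunc1 A t ≤ max (A t) 0 := by
  unfold trunc1
  split_ifs <;> simp

theorem mulOneSub1_hilb1_le (k : Type*) [Field k] (n : ℕ) {I : Ideal (MvPolynomial (Fin n) k)}
    (hI : I.IsHomogeneous (homogeneousSubmodule (Fin n) k)) {d : ℕ} {F : MvPolynomial (Fin n) k}
    (hF : F.IsHomogeneous d) (t : ℕ) :
    mulOneSub1 d (fun s => (hilb1 k n I s : ℤ)) t ≤ hilb1 k n (I ⊔ Ideal.span {F}) t := by
  set q := (Ideal.Quotient.mkₐ k I).toLinearMap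
  set π := (Ideal.Quotient.factorₐ k (le_sup_left : I ≤ I ⊔ Ideal.span {F})).toLinearMap
  set W := (homogeneousSubmodule (Fin n) k t).map q
  have hW : hilb1 k n (I ⊔ Ideal.span {F}) t = Module.finrank k (W.map π) := by
    rw [hilb1, ← Submodule.map_comp]; rfl
  have hrank := Submodule.finrank_map_add_finrank_inf_ker π W
  have hker : ∀ w ∈ W ⊓ LinearMap.ker π, ∃ a, w = q (homogeneousComponent t (F * a)) := by
    rintro _ ⟨⟨v, hv, rfl⟩, hπv⟩
    have hvJ : v ∈ I ⊔ Ideal.span {F} := Ideal.Quotient.eq_zero_iff_mem.1 hπv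
    obtain ⟨a, ha⟩ := exists_sub_homogeneousComponent_mul_mem hI hv hvJ
    exact ⟨a, Ideal.Quotient.eq.2 ha⟩
  have hWI : hilb1 k n I t = Module.finrank k W := rfl
  have hker_rank : Module.finrank k ↥(W ⊓ LinearMap.ker π) ≤
      if d ≤ t then hilb1 k n I (t - d) else 0 := by
    split_ifs with hdt
    · have hle : W ⊓ LinearMap.ker π ≤ ((homogeneousSubmodule (Fin n) k (t - d)).map q).map
          (LinearMap.mulLeft k (Ideal.Quotient.mk I F)) := by
        intro w hw
        obtain ⟨a, rfl⟩ := hker w hw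
        rw [homogeneousComponent_mul_of_isHomogeneous hF, if_pos hdt]
        exact ⟨_, ⟨_, homogeneousComponent_mem (t - d) a, rfl⟩, rfl⟩
      exact (Submodule.finrank_mono hle).trans (Submodule.finrank_map_le _ _)
    · have hbot : W ⊓ LinearMap.ker π = ⊥ := by
        refine (Submodule.eq_bot_iff _).2 fun w hw => ?_
        obtain ⟨a, rfl⟩ := hker w hw
        rw [homogeneousComponent_mul_of_isHomogeneous hF, if_neg hdt, map_zero]
      rw [hbot, finrank_bot]
  rw [mulOneSub1, hW, hWI]
  split_ifs at hker_rank ⊢ <;> omega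

/-- Let `R = k[x₁,…,x_n]/I` be a standard graded quotient and `f ∈ R_d` homogeneous
of degree `d` (represented by a homogeneous polynomial `F`). Then
`(R/(f))(u) ≥ [(1 − u^d)·R(u)]_+` coefficientwise. -/
theorem hilb1_quotient_ge_trunc (k : Type*) [Field k] (n : ℕ)
    (I : Ideal (MvPolynomial (Fin n) k))
    (hI : ∃ G : Set (MvPolynomial (Fin n) k),
      (∀ g ∈ G, ∃ t : ℕ, g.IsHomogeneous t) ∧ I = Ideal.span G)
    (d : ℕ) (F : MvPolynomial (Fin n) k) (hF : F.IsHomogeneous d) :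
    ∀ t : ℕ,
      (hilb1 k n (I ⊔ Ideal.span {F}) t : ℤ) ≥
        trunc1 (mulOneSub1 d (fun s => (hilb1 k n I s : ℤ))) t := by
  intro t
  have hIhom : I.IsHomogeneous (homogeneousSubmodule (Fin n) k) := by
    obtain ⟨G, hG, rfl⟩ := hI
    exact Ideal.homogeneous_span _ _ hG
  exact (trunc1_le_max _ t).trans
    (max_le (mulOneSub1_hilb1_le k n hIhom hF t) (Nat.cast_nonneg _))
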